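/- arXiv:1907.10682 — 2 statements merged into one kernel-verified Lean document; each statement's English description precedes it below -/
import Mathlib

section
/- Let A, C, Q, Z, B, D be bounded linear operators, I + Q invertible, L := (I + Q)⁻¹ ∘ Z, E := A + Z ∘ C + Q ∘ (A - I), ‖E‖ < 1. Then for every w, x₀, the unique e with e = (A + L∘C) e − L(D w) − B w − x₀ satisfies ‖e‖ ≤ (1/(1-‖E‖)) * ( ‖Z∘D + (I+Q)∘B‖ * ‖w‖ + ‖I + Q‖ * ‖x₀‖ ). -/
/-!
Applying the invertible operator `I + Q` to the fixed-point equation and using `(I + Q) L = Z`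
turns it into `(I - E) e = -r` with `r = (Z D + (I + Q) B) w + (I + Q) x₀`. Since `‖E‖ < 1`,
`I - E` is invertible by the Neumann series, and `‖e‖ ≤ ‖E‖ ‖e‖ + ‖r‖` gives the estimate.
-/

namespace ContinuousLinearMap

variable {𝕜 X : Type*} [NontriviallyNormedField 𝕜] [NormedAddCommGroup X] [NormedSpace 𝕜 X]

theorem existsUnique_sub_apply_eq [CompleteSpace X] {E : X →L[𝕜] X} (hE : ‖E‖ < 1) (v : X) :
    ∃! e : X, e - E e = v :=
  (isUnit_iff_bijective.mp (isUnit_one_sub_of_norm_lt_one hE)).existsUnique v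

theorem norm_le_div_of_sub_apply_eq {E : X →L[𝕜] X} (hE : ‖E‖ < 1) {e v : X}
    (h : e - E e = v) : ‖e‖ ≤ ‖v‖ / (1 - ‖E‖) := by
  have hne : ‖e‖ ≤ ‖E‖ * ‖e‖ + ‖v‖ :=
    calc ‖e‖ = ‖E e + v‖ := by rw [← h, add_sub_cancel]
      _ ≤ ‖E‖ * ‖e‖ + ‖v‖ := norm_add_le_of_le (E.le_opNorm e) le_rfl
  rw [le_div_iff₀ (sub_pos.mpr hE)]
  linarith

theorem eq_apply_sub_iff_sub_apply_eq {P T E : X →L[𝕜] X} (hP : Function.Injective P)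
    (h : P * (1 - T) = 1 - E) (e y : X) : e = T e - y ↔ e - E e = -P y := by
  calc e = T e - y ↔ P ((1 - T) e) = P (-y) := by
        rw [hP.eq_iff, sub_apply, one_apply_eq_self, sub_eq_iff_eq_add, neg_add_eq_sub]
    _ ↔ e - E e = -P y := by
        rw [← mul_apply_eq_comp, h, map_neg, sub_apply, one_apply_eq_self]

variable {Y : Type*} [NormedAddCommGroup Y] [NormedSpace 𝕜 Y]

theorem one_add_mul_one_sub_add_comp {A Q : X →L[𝕜] X} {C : X →L[𝕜] Y} {Z L : Y →L[𝕜] X}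
    (hL : (1 + Q).comp L = Z) :
    (1 + Q) * (1 - (A + L.comp C)) = 1 - (A + Z.comp C + Q * (A - 1)) := by
  have hLC : (1 + Q) * L.comp C = Z.comp C := by rw [mul_def, ← comp_assoc, hL]
  rw [mul_sub, mul_add, hLC]
  noncomm_ring

end ContinuousLinearMap

open ContinuousLinearMap in
theorem stmt_7_general {X₁ Y₁ W : Type*}
    [NormedAddCommGroup X₁] [NormedSpace ℝ X₁] [CompleteSpace X₁]
    [NormedAddCommGroup Y₁] [NormedSpace ℝ Y₁]
    [NormedAddCommGroup W] [NormedSpace ℝ W]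
    (A Q : X₁ →L[ℝ] X₁) (C : X₁ →L[ℝ] Y₁) (Z : Y₁ →L[ℝ] X₁)
    (B : W →L[ℝ] X₁) (D : W →L[ℝ] Y₁)
    (hQ : IsUnit (1 + Q))
    (L : Y₁ →L[ℝ] X₁) (hL : L = (Ring.inverse (1 + Q) : X₁ →L[ℝ] X₁).comp Z)
    (E : X₁ →L[ℝ] X₁) (hE : E = A + Z.comp C + Q * (A - 1))
    (hEnorm : ‖E‖ < 1) (w : W) (x₀ : X₁) :
    (∃! e : X₁, e = (A + L.comp C) e - L (D w) - B w - x₀) ∧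
      ∀ e : X₁, e = (A + L.comp C) e - L (D w) - B w - x₀ →
        ‖e‖ ≤ (1 / (1 - ‖E‖)) *
          (‖Z.comp D + (1 + Q).comp B‖ * ‖w‖ + ‖(1 + Q : X₁ →L[ℝ] X₁)‖ * ‖x₀‖) := by
  set P : X₁ →L[ℝ] X₁ := 1 + Q
  set r : X₁ := (Z.comp D + P.comp B) w + P x₀
  have hPL : P.comp L = Z := by
    rw [hL, ← comp_assoc, ← mul_def, Ring.mul_inverse_cancel _ hQ, one_def, id_comp]
  have hPy : P (L (D w) + (B w + x₀)) = r := by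
    simp only [r, map_add, add_apply, ← comp_apply, ← comp_assoc, hPL, add_assoc]
  have hiff (e : X₁) : e = (A + L.comp C) e - L (D w) - B w - x₀ ↔ e - E e = -r := by
    rw [sub_sub, sub_sub, ← hPy, hE]
    exact eq_apply_sub_iff_sub_apply_eq (isUnit_iff_bijective.mp hQ).injective
      (one_add_mul_one_sub_add_comp hPL) e _
  refine ⟨by simpa only [hiff] using existsUnique_sub_apply_eq hEnorm (-r), fun e he => ?_⟩
  have hr : ‖r‖ ≤ ‖Z.comp D + P.comp B‖ * ‖w‖ + ‖P‖ * ‖x₀‖ :=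
    norm_add_le_of_le ((Z.comp D + P.comp B).le_opNorm w) (P.le_opNorm x₀)
  calc ‖e‖ ≤ ‖-r‖ / (1 - ‖E‖) := norm_le_div_of_sub_apply_eq hEnorm ((hiff e).mp he)
    _ ≤ _ := by
      rw [norm_neg, one_div_mul_eq_div]
      exact div_le_div_of_nonneg_right hr (sub_pos.mpr hEnorm).le

theorem stmt_7 {X₁ Y₁ W : Type*}
    [NormedAddCommGroup X₁] [NormedSpace ℝ X₁] [CompleteSpace X₁]
    [NormedAddCommGroup Y₁] [NormedSpace ℝ Y₁] [CompleteSpace Y₁]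
    [NormedAddCommGroup W] [NormedSpace ℝ W] [CompleteSpace W]
    (A Q : X₁ →L[ℝ] X₁) (C : X₁ →L[ℝ] Y₁) (Z : Y₁ →L[ℝ] X₁)
    (B : W →L[ℝ] X₁) (D : W →L[ℝ] Y₁)
    (hQ : IsUnit (1 + Q))
    (L : Y₁ →L[ℝ] X₁) (hL : L = (Ring.inverse (1 + Q) : X₁ →L[ℝ] X₁).comp Z)
    (E : X₁ →L[ℝ] X₁) (hE : E = A + Z.comp C + Q * (A - 1))
    (hEnorm : ‖E‖ < 1) (w : W) (x₀ : X₁) :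
    (∃! e : X₁, e = (A + L.comp C) e - L (D w) - B w - x₀) ∧
      ∀ e : X₁, e = (A + L.comp C) e - L (D w) - B w - x₀ →
        ‖e‖ ≤ (1 / (1 - ‖E‖)) *
          (‖Z.comp D + (1 + Q).comp B‖ * ‖w‖ + ‖(1 + Q : X₁ →L[ℝ] X₁)‖ * ‖x₀‖) :=
  stmt_7_general A Q C Z B D hQ L hL E hE hEnorm w x₀
end

section
/- Let A, C, Q, Z, B, D be bounded linear operators, I + Q invertible, A + Z∘C + Q∘(A-I) = 0, L := (I+Q)⁻¹∘Z, and suppose ‖[B I] + [Z Q][D 0; B I]‖ ≤ γ, i.e. the operator mapping (w, x₀) ↦ (B + Z∘D + Q∘B) w + (I + Q) x₀ has norm at most γ. Then the estimation-error map (w, x₀) ↦ e, where e = (A + L∘C) e − L(D w) − B w − x₀, has induced norm at most γ. -/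
theorem stmt_9 {X₁ Y₁ W : Type*}
    [NormedAddCommGroup X₁] [NormedSpace ℝ X₁] [CompleteSpace X₁]
    [NormedAddCommGroup Y₁] [NormedSpace ℝ Y₁] [CompleteSpace Y₁]
    [NormedAddCommGroup W] [NormedSpace ℝ W] [CompleteSpace W]
    (A Q : X₁ →L[ℝ] X₁) (C : X₁ →L[ℝ] Y₁) (Z : Y₁ →L[ℝ] X₁)
    (B : W →L[ℝ] X₁) (D : W →L[ℝ] Y₁) (γ : ℝ)
    (hQ : IsUnit (1 + Q))
    (hZero : A + Z.comp C + Q * (A - 1) = 0)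
    (L : Y₁ →L[ℝ] X₁) (hL : L = (Ring.inverse (1 + Q) : X₁ →L[ℝ] X₁).comp Z)
    (hγ : ∀ (w : W) (x₀ : X₁),
      ‖(B + Z.comp D + Q.comp B) w + (1 + Q) x₀‖ ≤ γ * max ‖w‖ ‖x₀‖) :
    ∀ (w : W) (x₀ : X₁) (e : X₁),
      e = (A + L.comp C) e - L (D w) - B w - x₀ → ‖e‖ ≤ γ * max ‖w‖ ‖x₀‖ := by
  intro w x₀ e he
  have hZL : (1 + Q).comp L = Z := by
    rw [hL, ← ContinuousLinearMap.comp_assoc]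
    have h1 : (1 + Q).comp (Ring.inverse (1 + Q) : X₁ →L[ℝ] X₁)
        = (1 : X₁ →L[ℝ] X₁) := Ring.mul_inverse_cancel _ hQ
    rw [h1, ContinuousLinearMap.one_def, ContinuousLinearMap.id_comp]
  have hcomp : (1 + Q).comp (A + L.comp C) = Q := by
    have expand : (1 + Q).comp (A + L.comp C)
        = A + ((1 + Q).comp L).comp C + (Q * (A - 1)) + Q := by
      ext x
      simp [ContinuousLinearMap.comp_apply, ContinuousLinearMap.mul_apply, map_add, map_sub]
      abel
    rw [expand, hZL]
    have : A + Z.comp C + Q * (A - 1) + Q = 0 + Q := by rw [← hZero]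
    rw [this, zero_add]
  have key : (1 + Q) e = Q e - Z (D w) - (1 + Q) (B w) - (1 + Q) x₀ := by
    conv_lhs => rw [he]
    simp only [map_sub]
    congr 1
    · congr 1
      · congr 1
        · exact congrArg (fun T : X₁ →L[ℝ] X₁ => T e) hcomp
        · exact congrArg (fun T : Y₁ →L[ℝ] X₁ => T (D w)) hZL
  have hee : e = -((B + Z.comp D + Q.comp B) w + (1 + Q) x₀) := by
    have h1 : (1 + Q) e = e + Q e := by
      simp [ContinuousLinearMap.add_apply]
    rw [h1] at key
    have h2 : e = (Q e - Z (D w) - (1 + Q) (B w) - (1 + Q) x₀) - Q e := by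
      rw [← key]; abel
    rw [h2]
    simp only [ContinuousLinearMap.add_apply, ContinuousLinearMap.one_apply,
      ContinuousLinearMap.coe_comp', Function.comp_apply]
    abel
  rw [hee, norm_neg]
  exact hγ w x₀
end
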